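/- For every natural number n with n = 3 or n ≥ 5, the cycle graph ℤ_n is H-rigid. -/

import Mathlib

open SimpleGraph

/-- The link of a set `S` of vertices: all vertices adjacent to every vertex of `S`.
(For `S = ∅` this is all of `V`.) -/
def link {V : Type*} (G : SimpleGraph V) (S : Set V) : Set V :=
  {v : V | ∀ s ∈ S, G.Adj v s}

/-- A nonempty set of vertices is internal if its link is not a clique. -/
def IsInternalSet {V : Type*} (G : SimpleGraph V) (S : Set V) : Prop :=
  S.Nonempty ∧ ¬ G.IsClique (link G S)

/-- A vertex is internal if its neighborhood is not a clique. -/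
def IsInternalVertex {V : Type*} (G : SimpleGraph V) (v : V) : Prop :=
  ¬ G.IsClique (G.neighborSet v)

/-- The induced subgraph on the internal vertices. -/
def intGraph {V : Type*} (G : SimpleGraph V) :
    SimpleGraph ↥{v : V | IsInternalVertex G v} :=
  G.induce {v : V | IsInternalVertex G v}

/-- A graph is H-rigid if it is locally finite, all its internal sets are singletons,
and every nonempty finite set of vertices with nonempty link induces a subgraph all of
whose connected components are complete. -/
def HRigid {V : Type*} (G : SimpleGraph V) : Prop :=
  (∀ v : V, (G.neighborSet v).Finite) ∧
  (∀ S : Set V, IsInternalSet G S → ∃ v : V, S = {v}) ∧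
  (∀ S : Set V, S.Finite → S.Nonempty → (link G S).Nonempty →
    ∀ u w : ↥S, (G.induce S).Reachable u w → u = w ∨ (G.induce S).Adj u w)

/-- The eccentricity of a vertex: the sup of extended graph distances to all vertices. -/
noncomputable def eccentricity {V : Type*} (G : SimpleGraph V) (t : V) : ℕ∞ :=
  ⨆ s : V, G.edist t s

/-- The radius of a graph, valued in `ℕ∞`. -/
noncomputable def graphRadius {V : Type*} (G : SimpleGraph V) : ℕ∞ :=
  ⨅ t : V, eccentricity G t

/-- The infinite line graph on `ℤ`: `i` and `j` adjacent iff `|i - j| = 1`. -/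
def lineZ : SimpleGraph ℤ where
  Adj i j := |i - j| = 1
  symm := by constructor; intro i j h; rwa [abs_sub_comm]
  loopless := by constructor; intro i h; simp at h

/-- The cycle graph on `ZMod n`: `i` and `j` adjacent iff `i - j = 1` or `j - i = 1`. -/
def cycleZMod (n : ℕ) : SimpleGraph (ZMod n) :=
  SimpleGraph.circulantGraph ({1} : Set (ZMod n))

/-!
For `n = 3` the cycle is the complete graph, in which every link is a clique and every pair of
distinct vertices is adjacent. For `n ≥ 5` the cycle has girth `n`: it has no triangles, so a
vertex in the link of `S` sees `S` as an independent set, and two distinct vertices have at most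
one common neighbour, so the link of a set with two elements is a clique.
-/

section HRigid

variable {V : Type*} {G : SimpleGraph V} {S : Set V}

lemma link_subset_commonNeighbors {a b : V} (ha : a ∈ S) (hb : b ∈ S) :
    link G S ⊆ G.commonNeighbors a b :=
  fun _ hx => (G.mem_commonNeighbors).mpr ⟨(hx a ha).symm, (hx b hb).symm⟩

lemma induce_eq_bot_of_mem_link (h3 : G.CliqueFree 3) {v : V} (hv : v ∈ link G S) :
    G.induce S = ⊥ := by
  ext a b
  simp only [bot_adj, iff_false, induce_adj]
  intro hab
  classical
  exact h3 {v, (a : V), (b : V)} (is3Clique_triple_iff.mpr ⟨hv a a.2, hv b b.2, hab⟩)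

lemma IsInternalSet.subsingleton
    (hcommon : ∀ a b : V, a ≠ b → (G.commonNeighbors a b).Subsingleton)
    (hS : IsInternalSet G S) : S.Subsingleton := by
  intro a ha b hb
  by_contra hab
  exact hS.2 (IsClique.of_subsingleton ((hcommon a b hab).anti (link_subset_commonNeighbors ha hb)))

theorem hRigid_of_cliqueFree_three (hfin : ∀ v : V, (G.neighborSet v).Finite)
    (h3 : G.CliqueFree 3)
    (hcommon : ∀ a b : V, a ≠ b → (G.commonNeighbors a b).Subsingleton) : HRigid G := by
  refine ⟨hfin, fun S hS => ?_, fun S _ _ ⟨v, hv⟩ u w huw => ?_⟩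
  · obtain ⟨a, ha⟩ := hS.1
    exact ⟨a, (hS.subsingleton hcommon).eq_singleton_of_mem ha⟩
  · rw [induce_eq_bot_of_mem_link h3 hv, reachable_bot] at huw
    exact Or.inl huw

theorem hRigid_top [Finite V] : HRigid (⊤ : SimpleGraph V) := by
  refine ⟨fun _ => Set.toFinite _, fun S hS => absurd (IsClique.top (s := link ⊤ S)) hS.2,
    fun S _ _ _ u w _ => ?_⟩
  by_cases huw : u = w
  · exact Or.inl huw
  · exact Or.inr (induce_adj.mpr fun h => huw (Subtype.ext h))

end HRigid

section cycleZMod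

variable {n : ℕ}

lemma eq_add_one_or_eq_sub_one_of_cycleZMod_adj {a b : ZMod n} (h : (cycleZMod n).Adj a b) :
    b = a + 1 ∨ b = a - 1 := by
  rw [cycleZMod, circulantGraph_adj, Set.mem_singleton_iff, Set.mem_singleton_iff] at h
  obtain ⟨-, h | h⟩ := h
  · exact Or.inr (by linear_combination -h)
  · exact Or.inl (by linear_combination h)

lemma cycleZMod_neighborSet_finite (a : ZMod n) : ((cycleZMod n).neighborSet a).Finite :=
  (Set.toFinite {a + 1, a - 1}).subset fun _ hb => eq_add_one_or_eq_sub_one_of_cycleZMod_adj hb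

lemma cycleZMod_three_eq_top : cycleZMod 3 = ⊤ := by
  ext a b
  simp only [cycleZMod, circulantGraph_adj, Set.mem_singleton_iff, top_adj]
  revert a b
  decide

lemma cycleZMod_cliqueFree_three (hn : ¬ n ∣ 3) : (cycleZMod n).CliqueFree 3 := by
  have h3 : (3 : ZMod n) ≠ 0 := by exact_mod_cast (ZMod.natCast_eq_zero_iff 3 n).not.mpr hn
  intro t ht
  obtain ⟨a, b, c, -, -, -, rfl⟩ := is3Clique_iff.mp ht
  obtain ⟨hab, hac, hbc⟩ := is3Clique_triple_iff.mp ht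
  -- the three steps `b - a`, `c - b`, `a - c` are each `±1` and sum to zero, forcing `3 = 0`
  rcases eq_add_one_or_eq_sub_one_of_cycleZMod_adj hab with h1 | h1 <;>
    rcases eq_add_one_or_eq_sub_one_of_cycleZMod_adj hac with h2 | h2 <;>
    rcases eq_add_one_or_eq_sub_one_of_cycleZMod_adj hbc with h | h <;> grind

lemma cycleZMod_commonNeighbors_subsingleton (hn : ¬ n ∣ 4) {a b : ZMod n} (hab : a ≠ b) :
    ((cycleZMod n).commonNeighbors a b).Subsingleton := by
  have h4 : (4 : ZMod n) ≠ 0 := by exact_mod_cast (ZMod.natCast_eq_zero_iff 4 n).not.mpr hn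
  intro x hx y hy
  rw [mem_commonNeighbors] at hx hy
  -- `{a, b} = {x - 1, x + 1} = {y - 1, y + 1}`, and `x ≠ y` would give `x = y ± 2`, `4 = 0`
  rcases eq_add_one_or_eq_sub_one_of_cycleZMod_adj hx.1.symm with h1 | h1 <;>
    rcases eq_add_one_or_eq_sub_one_of_cycleZMod_adj hx.2.symm with h2 | h2 <;>
    rcases eq_add_one_or_eq_sub_one_of_cycleZMod_adj hy.1.symm with h3 | h3 <;>
    rcases eq_add_one_or_eq_sub_one_of_cycleZMod_adj hy.2.symm with h5 | h5 <;> grind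

end cycleZMod

/-- For `n = 3` or `n ≥ 5`, the cycle graph `ℤ_n` is H-rigid. -/
theorem stmt4 (n : ℕ) (hn : n = 3 ∨ 5 ≤ n) : HRigid (cycleZMod n) := by
  rcases hn with rfl | hn
  · rw [cycleZMod_three_eq_top]
    exact hRigid_top
  · exact hRigid_of_cliqueFree_three cycleZMod_neighborSet_finite
      (cycleZMod_cliqueFree_three (Nat.not_dvd_of_pos_of_lt three_pos (by omega)))
      fun _ _ =>
        cycleZMod_commonNeighbors_subsingleton (Nat.not_dvd_of_pos_of_lt four_pos (by omega))
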